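/- arXiv:2005.01299 — 7 statements merged into one kernel-verified Lean document; each statement's English description precedes it below -/
import Mathlib

section
/- Let Q ∈ ℝ^{4m×4m} and P ∈ ℝ^{4n×4n} be orthogonal multi-symplectic matrices and let M ∈ ℝ^{4m×4n} be JRS-symmetric. Then Q M Pᵀ is JRS-symmetric. -/
open Matrix Kronecker

noncomputable section

/-- The 4×4 block-sign matrix defining `J_n`. -/
def Jq : Matrix (Fin 4) (Fin 4) ℝ :=
  !![0, 0, -1, 0; 0, 0, 0, -1; 1, 0, 0, 0; 0, 1, 0, 0]

/-- The 4×4 block-sign matrix defining `R_n`. -/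
def Rq : Matrix (Fin 4) (Fin 4) ℝ :=
  !![0, -1, 0, 0; 1, 0, 0, 0; 0, 0, 0, 1; 0, 0, -1, 0]

/-- The 4×4 block-sign matrix defining `S_n`. -/
def Sq : Matrix (Fin 4) (Fin 4) ℝ :=
  !![0, 0, 0, -1; 0, 0, 1, 0; 0, -1, 0, 0; 1, 0, 0, 0]

/-- `J_n = [[0,0,-I,0],[0,0,0,-I],[I,0,0,0],[0,I,0,0]]`, as a Kronecker product. -/
def Jmat (n : ℕ) : Matrix (Fin 4 × Fin n) (Fin 4 × Fin n) ℝ :=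
  Jq ⊗ₖ (1 : Matrix (Fin n) (Fin n) ℝ)

/-- `R_n = [[0,-I,0,0],[I,0,0,0],[0,0,0,I],[0,0,-I,0]]`. -/
def Rmat (n : ℕ) : Matrix (Fin 4 × Fin n) (Fin 4 × Fin n) ℝ :=
  Rq ⊗ₖ (1 : Matrix (Fin n) (Fin n) ℝ)

/-- `S_n = [[0,0,0,-I],[0,0,I,0],[0,-I,0,0],[I,0,0,0]]`. -/
def Smat (n : ℕ) : Matrix (Fin 4 × Fin n) (Fin 4 × Fin n) ℝ :=
  Sq ⊗ₖ (1 : Matrix (Fin n) (Fin n) ℝ)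

/-- `M` is JRS-symmetric: `J_m M J_nᵀ = M`, `R_m M R_nᵀ = M`, `S_m M S_nᵀ = M`. -/
def JRSSymmetric {m n : ℕ} (M : Matrix (Fin 4 × Fin m) (Fin 4 × Fin n) ℝ) : Prop :=
  Jmat m * M * (Jmat n)ᵀ = M ∧ Rmat m * M * (Rmat n)ᵀ = M ∧ Smat m * M * (Smat n)ᵀ = M

/-- `O ∈ ℝ^{4m×4n}` is multi-symplectic: `O J_n Oᵀ = J_m`, `O R_n Oᵀ = R_m`, `O S_n Oᵀ = S_m`. -/
def MultiSymplectic {m n : ℕ} (O : Matrix (Fin 4 × Fin m) (Fin 4 × Fin n) ℝ) : Prop :=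
  O * Jmat n * Oᵀ = Jmat m ∧ O * Rmat n * Oᵀ = Rmat m ∧ O * Smat n * Oᵀ = Smat m

/-- if `Q`, `P` are orthogonal multi-symplectic and `M` is JRS-symmetric,
then `Q M Pᵀ` is JRS-symmetric. -/
theorem jrsSymmetric_conj {m n : ℕ}
    (Q : Matrix (Fin 4 × Fin m) (Fin 4 × Fin m) ℝ)
    (P : Matrix (Fin 4 × Fin n) (Fin 4 × Fin n) ℝ)
    (M : Matrix (Fin 4 × Fin m) (Fin 4 × Fin n) ℝ)
    (hQorth : Q * Qᵀ = 1 ∧ Qᵀ * Q = 1) (hPorth : P * Pᵀ = 1 ∧ Pᵀ * P = 1)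
    (hQ : MultiSymplectic Q) (hP : MultiSymplectic P)
    (hM : JRSSymmetric M) :
    JRSSymmetric (Q * M * Pᵀ) := by
  obtain ⟨hJM, hRM, hSM⟩ := hM
  obtain ⟨hJQ, hRQ, hSQ⟩ := hQ
  obtain ⟨hJP, hRP, hSP⟩ := hP
  have comm : ∀ {k : ℕ} (O A : Matrix (Fin 4 × Fin k) (Fin 4 × Fin k) ℝ),
      Oᵀ * O = 1 → O * A * Oᵀ = A → A * O = O * A := by
    intro k O A h2 h3
    calc A * O = O * A * Oᵀ * O := by rw [h3]
    _ = O * A := by rw [mul_assoc (O * A), h2, mul_one]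
  have key : ∀ (X : Matrix (Fin 4 × Fin m) (Fin 4 × Fin m) ℝ)
      (Y : Matrix (Fin 4 × Fin n) (Fin 4 × Fin n) ℝ),
      X * Q = Q * X → Y * P = P * Y → X * M * Yᵀ = M →
      X * (Q * M * Pᵀ) * Yᵀ = Q * M * Pᵀ := by
    intro X Y hc1 hc2 h
    have h2 : Pᵀ * Yᵀ = Yᵀ * Pᵀ := by rw [← transpose_mul, ← transpose_mul, hc2]
    simp only [← Matrix.mul_assoc]
    rw [Matrix.mul_assoc (X * Q * M) Pᵀ Yᵀ, h2, ← Matrix.mul_assoc (X * Q * M) Yᵀ Pᵀ, hc1,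
      Matrix.mul_assoc Q X M, Matrix.mul_assoc Q (X * M) Yᵀ, h]
  exact ⟨key _ _ (comm Q _ hQorth.2 hJQ) (comm P _ hPorth.2 hJP) hJM,
    key _ _ (comm Q _ hQorth.2 hRQ) (comm P _ hPorth.2 hRP) hRM,
    key _ _ (comm Q _ hQorth.2 hSQ) (comm P _ hPorth.2 hSP) hSM⟩
end
end

section
/- (Multi-Symplectic Bidiagonalization Decomposition) Let M ∈ ℝ^{4m×4n} be JRS-symmetric. Then there exist orthogonal multi-symplectic matrices Q ∈ ℝ^{4m×4m} and P ∈ ℝ^{4n×4n} and an upper bidiagonal matrix B ∈ ℝ^{m×n} such that M = Q · diag(B,B,B,B) · Pᵀ, where diag(B,B,B,B) ∈ ℝ^{4m×4n} is the block-diagonal matrix with B repeated four times along the diagonal of the 4×4 block partition. -/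
open Matrix Kronecker

noncomputable section

/-- `diag(B,B,B,B)`: the block-diagonal matrix with `B` repeated four times. -/
def blockDiag4 {m n : ℕ} (B : Matrix (Fin m) (Fin n) ℝ) :
    Matrix (Fin 4 × Fin m) (Fin 4 × Fin n) ℝ :=
  (1 : Matrix (Fin 4) (Fin 4) ℝ) ⊗ₖ B

/-- `B` is upper bidiagonal: `B i j = 0` unless `j = i` or `j = i + 1`. -/
def UpperBidiagonal {m n : ℕ} (B : Matrix (Fin m) (Fin n) ℝ) : Prop :=
  ∀ (i : Fin m) (j : Fin n), (j : ℕ) ≠ (i : ℕ) → (j : ℕ) ≠ (i : ℕ) + 1 → B i j = 0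

/-!
Identify `ℝ⁴` with `ℍ` through the basis `1, i, j, k`. Then `Jq`, `Rq`, `Sq` are the matrices of
right multiplication by `j`, `i`, `k`, and a real `4 × 4` matrix commuting with right
multiplication by `i` and `j` is a left multiplication. So a JRS-symmetric `M` is the real image
`realRep A` of a quaternion matrix `A` (each entry `q` replaced by the matrix of `x ↦ q * x`), and
the real image of a unitary quaternion matrix is orthogonal and commutes with `J`, `R`, `S`, i.e. is
multi-symplectic. It remains to write `A = U * B * Vᴴ` with `U`, `V` unitary and `B` real upper
bidiagonal. As in Golub–Kahan, a quaternionic Householder reflection, preceded by a unit-quaternion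
phase that makes the pivot real, clears the first column below the diagonal; a second one, acting
on columns `2, …, n`, reduces the first row to its first two entries; the remaining block is
handled recursively.
-/

open Quaternion

instance : StarModule ℝ ℍ := ⟨fun r q => by ext <;> simp⟩

section Border

variable {α β : Type*}

def leadVec [Zero α] (n : ℕ) (a : α) : Fin n → α := fun i => if (i : ℕ) = 0 then a else 0

@[simp] lemma leadVec_zero [Zero α] (n : ℕ) (a : α) : leadVec (n + 1) a 0 = a := rfl

@[simp] lemma leadVec_succ [Zero α] (n : ℕ) (a : α) (i : Fin n) : leadVec (n + 1) a i.succ = 0 := by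
  simp [leadVec]

lemma comp_leadVec [Zero α] [Zero β] {f : α → β} (hf : f 0 = 0) (n : ℕ) (a : α) :
    f ∘ leadVec n a = leadVec n (f a) := by
  ext i
  simp [leadVec, apply_ite f, hf]

variable {m n : ℕ}

def border (a : α) (r : Fin n → α) (c : Fin m → α) (C : Matrix (Fin m) (Fin n) α) :
    Matrix (Fin (m + 1)) (Fin (n + 1)) α :=
  of (Fin.cons (Fin.cons a r) fun i => Fin.cons (c i) (C i))

section Apply

variable (a : α) (r : Fin n → α) (c : Fin m → α) (C : Matrix (Fin m) (Fin n) α)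

@[simp] lemma border_zero_zero : border a r c C 0 0 = a := rfl

@[simp] lemma border_zero_succ (j : Fin n) : border a r c C 0 j.succ = r j := rfl

@[simp] lemma border_succ_zero (i : Fin m) : border a r c C i.succ 0 = c i := rfl

@[simp] lemma border_succ_succ (i : Fin m) (j : Fin n) : border a r c C i.succ j.succ = C i j := rfl

end Apply

lemma eq_border (A : Matrix (Fin (m + 1)) (Fin (n + 1)) α) :
    A = border (A 0 0) (fun j => A 0 j.succ) (fun i => A i.succ 0)
      (A.submatrix Fin.succ Fin.succ) := by
  ext i j
  cases i using Fin.cases <;> cases j using Fin.cases <;> rfl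

lemma map_border (f : α → β) (a : α) (r : Fin n → α) (c : Fin m → α)
    (C : Matrix (Fin m) (Fin n) α) :
    (border a r c C).map f = border (f a) (f ∘ r) (f ∘ c) (C.map f) := by
  ext i j
  cases i using Fin.cases <;> cases j using Fin.cases <;> rfl

lemma conjTranspose_border [Star α] (a : α) (r : Fin n → α) (c : Fin m → α)
    (C : Matrix (Fin m) (Fin n) α) : (border a r c C)ᴴ = border (star a) (star c) (star r) Cᴴ := by
  ext i j
  cases i using Fin.cases <;> cases j using Fin.cases <;> rfl

lemma border_mul_border [NonUnitalNonAssocSemiring α] {k : ℕ} (a : α) (r : Fin n → α)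
    (c : Fin m → α) (C : Matrix (Fin m) (Fin n) α) (a' : α) (r' : Fin k → α) (c' : Fin n → α)
    (C' : Matrix (Fin n) (Fin k) α) :
    border a r c C * border a' r' c' C' = border (a * a' + r ⬝ᵥ c') (a • r' + r ᵥ* C')
      (MulOpposite.op a' • c + C *ᵥ c') (vecMulVec c r' + C * C') := by
  ext i j
  cases i using Fin.cases <;> cases j using Fin.cases <;>
    simp [mul_apply, Fin.sum_univ_succ, dotProduct, vecMul, mulVec, vecMulVec]

lemma border_one [Zero α] [One α] : border (1 : α) 0 0 (1 : Matrix (Fin n) (Fin n) α) = 1 := by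
  ext i j
  cases i using Fin.cases <;> cases j using Fin.cases <;>
    simp [one_apply, Fin.succ_ne_zero, (Fin.succ_ne_zero _).symm]

lemma upperBidiagonal_border {C : Matrix (Fin m) (Fin n) ℝ} (hC : UpperBidiagonal C) (a b : ℝ) :
    UpperBidiagonal (border a (leadVec n b) 0 C) := by
  intro i j hij hij'
  cases i using Fin.cases <;> cases j using Fin.cases
  · simp at hij
  · simp_all [leadVec]
  · rfl
  · exact hC _ _ (by simpa using hij) (by simpa using hij')

end Border

namespace Quaternion

variable {ι : Type*} {m n : ℕ}

lemma coe_smul_pi (r : ℝ) (v : ι → ℍ) : (r : ℍ) • v = r • v :=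
  funext fun _ => coe_mul_eq_smul r _

lemma op_coe_smul_pi (r : ℝ) (v : ι → ℍ) : MulOpposite.op (r : ℍ) • v = r • v :=
  funext fun _ => mul_coe_eq_smul r _

lemma star_dotProduct_self [Fintype ι] (u : ι → ℍ) :
    star u ⬝ᵥ u = ((∑ i, normSq (u i) : ℝ) : ℍ) := by
  rw [← algebraMap_def, map_sum, dotProduct]
  exact Finset.sum_congr rfl fun i _ => by rw [algebraMap_def, Pi.star_apply, star_mul_self]

lemma exists_normSq_eq_one_mul_eq_coe (q : ℍ) : ∃ t : ℍ, normSq t = 1 ∧ ∃ a : ℝ, t * q = a := by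
  rcases eq_or_ne q 0 with rfl | hq
  · exact ⟨1, map_one _, 0, by simp⟩
  · refine ⟨(‖q‖ : ℍ) * q⁻¹, ?_, ‖q‖, by rw [mul_assoc, inv_mul_cancel₀ hq, mul_one]⟩
    rw [map_mul, map_inv₀, normSq_coe, normSq_eq_norm_mul_self, sq, mul_inv_cancel₀]
    simpa using hq

theorem exists_unitary_mulVec_eq_sub (u x : Fin n → ℍ)
    (h : star u ⬝ᵥ x = ((∑ i, normSq (u i)) / 2 : ℝ)) :
    ∃ H ∈ unitary (Matrix (Fin n) (Fin n) ℍ), H *ᵥ x = x - u := by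
  set S := ∑ i, normSq (u i)
  rcases eq_or_ne S 0 with hS | hS
  · have hu : u = 0 := funext fun i => normSq_eq_zero.mp <|
      (Finset.sum_eq_zero_iff_of_nonneg fun j _ => normSq_nonneg).mp hS i (Finset.mem_univ i)
    exact ⟨1, one_mem _, by simp [hu]⟩
  set P := vecMulVec u (star u)
  have hPP : P * P = S • P := by
    rw [vecMulVec_mul_vecMulVec, star_dotProduct_self, coe_smul_pi, vecMulVec_smul]
  have hH : (1 - (2 / S) • P)ᴴ = 1 - (2 / S) • P := by
    rw [conjTranspose_sub, conjTranspose_one, conjTranspose_smul, conjTranspose_vecMulVec,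
      star_star, star_trivial]
  have hHH : (1 - (2 / S) • P) * (1 - (2 / S) • P) = 1 := by
    have hc : 2 / S * (2 / S) * S = 2 / S + 2 / S := by field_simp; ring
    rw [sub_mul, mul_sub, mul_sub, smul_mul_smul_comm, hPP, smul_smul, hc, add_smul]
    simp only [mul_one, one_mul]
    abel
  refine ⟨1 - (2 / S) • P, ?_, ?_⟩
  · rw [Unitary.mem_iff, star_eq_conjTranspose, hH, hHH]
    exact ⟨rfl, rfl⟩
  · rw [sub_mulVec, one_mulVec, smul_mulVec, vecMulVec_mulVec, h, op_coe_smul_pi, smul_smul,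
      show 2 / S * (S / 2) = 1 by field_simp, one_smul]

theorem exists_unitary_mulVec_eq_leadVec (x : Fin n → ℍ) :
    ∃ U ∈ unitary (Matrix (Fin n) (Fin n) ℍ), ∃ r : ℝ, U *ᵥ x = leadVec n (r : ℍ) := by
  rcases n with _ | n
  · exact ⟨1, one_mem _, 0, Subsingleton.elim _ _⟩
  obtain ⟨t, ht, a, hta⟩ := exists_normSq_eq_one_mul_eq_coe (x 0)
  have hD : diagonal (fun _ => t) ∈ unitary (Matrix (Fin (n + 1)) (Fin (n + 1)) ℍ) := by
    simp [Unitary.mem_iff, star_eq_conjTranspose, star_mul_self, self_mul_star, ht]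
  set y := diagonal (fun _ => t) *ᵥ x
  have hy0 : y 0 = a := by simp [y, hta]
  set T := ∑ j : Fin n, normSq (y j.succ)
  have hT : 0 ≤ T := Finset.sum_nonneg fun j _ => normSq_nonneg
  set N := √(a ^ 2 + T)
  have hN : N ^ 2 = a ^ 2 + T := Real.sq_sqrt (by positivity)
  set u := y - leadVec (n + 1) (N : ℍ)
  have hu : star u ⬝ᵥ y = ((∑ i, normSq (u i)) / 2 : ℝ) := by
    have htail : ∑ j : Fin n, star (y j.succ) * y j.succ = (T : ℍ) :=
      star_dotProduct_self (ι := Fin n) fun j => y j.succ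
    simp only [dotProduct, Fin.sum_univ_succ, u, Pi.sub_apply, Pi.star_apply, leadVec_zero,
      leadVec_succ, sub_zero, hy0, htail, star_coe, ← coe_sub, ← coe_mul, ← coe_add, normSq_coe]
    congr 1
    linear_combination (-1 / 2 : ℝ) * hN
  obtain ⟨H, hH, hHy⟩ := exists_unitary_mulVec_eq_sub u y hu
  exact ⟨H * diagonal (fun _ => t), mul_mem hH hD, N, by rw [← mulVec_mulVec, hHy, sub_sub_cancel]⟩

lemma border_mem_unitary {X : Matrix (Fin n) (Fin n) ℍ}
    (hX : X ∈ unitary (Matrix (Fin n) (Fin n) ℍ)) :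
    border 1 0 0 X ∈ unitary (Matrix (Fin (n + 1)) (Fin (n + 1)) ℍ) := by
  simp only [Unitary.mem_iff, star_eq_conjTranspose] at hX ⊢
  simp [conjTranspose_border, border_mul_border, hX, border_one]

lemma border_mulVec_leadVec (X : Matrix (Fin n) (Fin n) ℍ) (a : ℍ) :
    border 1 0 0 X *ᵥ leadVec (n + 1) a = leadVec (n + 1) a := by
  ext i : 1
  cases i using Fin.cases <;> simp [mulVec, dotProduct, Fin.sum_univ_succ]

lemma star_leadVec_coe (r : ℝ) : star (leadVec n (r : ℍ)) = leadVec n (r : ℍ) := by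
  ext i : 1
  simp [leadVec, apply_ite star]

lemma leadVec_coe_vecMul_conjTranspose {V : Matrix (Fin n) (Fin n) ℍ}
    (hV : ∀ a, V *ᵥ leadVec n a = leadVec n a) (r : ℝ) :
    leadVec n (r : ℍ) ᵥ* Vᴴ = leadVec n (r : ℍ) := by
  rw [← star_leadVec_coe, ← star_mulVec, hV]

theorem exists_unitary_mul_mul_eq_border (A : Matrix (Fin (m + 1)) (Fin (n + 1)) ℍ) :
    ∃ U ∈ unitary (Matrix (Fin (m + 1)) (Fin (m + 1)) ℍ),
    ∃ W ∈ unitary (Matrix (Fin n) (Fin n) ℍ), ∃ (γ δ : ℝ) (C : Matrix (Fin m) (Fin n) ℍ),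
      U * A * (border 1 0 0 W)ᴴ = border (γ : ℍ) (leadVec n (δ : ℍ)) 0 C := by
  obtain ⟨U, hU, γ, hγ⟩ := exists_unitary_mulVec_eq_leadVec fun i => A i 0
  obtain ⟨W, hW, δ, hδ⟩ := exists_unitary_mulVec_eq_leadVec (star fun j => (U * A) 0 j.succ)
  refine ⟨U, hU, W, hW, γ, δ, (U * A).submatrix Fin.succ Fin.succ * Wᴴ, ?_⟩
  have hcorner : (U * A) 0 0 = γ := congrFun hγ 0
  have hcol : (fun i => (U * A) (Fin.succ i) 0) = 0 := funext fun i => congrFun hγ i.succ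
  have hrow : (fun j => (U * A) 0 j.succ) ᵥ* Wᴴ = leadVec n (δ : ℍ) := by
    simpa [star_mulVec, star_leadVec_coe] using congrArg star hδ
  conv_lhs => rw [eq_border (U * A), conjTranspose_border, border_mul_border]
  simp [hcorner, hcol, hrow]

/-- The condition that `V` fixes the first basis vector is what lets the recursive step keep the
first row `(γ, δ, 0, …, 0)` of the bordered matrix. -/
theorem exists_unitary_upperBidiagonal : ∀ {m : ℕ} (A : Matrix (Fin m) (Fin n) ℍ),
    ∃ U ∈ unitary (Matrix (Fin m) (Fin m) ℍ), ∃ V ∈ unitary (Matrix (Fin n) (Fin n) ℍ),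
    ∃ B : Matrix (Fin m) (Fin n) ℝ, UpperBidiagonal B ∧ (∀ a, V *ᵥ leadVec n a = leadVec n a) ∧
      A = U * B.map ((↑) : ℝ → ℍ) * Vᴴ := by
  induction n with
  | zero =>
    intro m A
    exact ⟨1, one_mem _, 1, one_mem _, 0, fun _ j => j.elim0, fun _ => Subsingleton.elim _ _,
      Subsingleton.elim _ _⟩
  | succ n ih =>
    rintro (_ | m) A
    · exact ⟨1, one_mem _, 1, one_mem _, 0, fun i => i.elim0, by simp, Subsingleton.elim _ _⟩
    obtain ⟨U, hU, W, hW, γ, δ, C, hA⟩ := exists_unitary_mul_mul_eq_border A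
    obtain ⟨U', hU', V', hV', B', hB', hV'fix, hC⟩ := ih C
    refine ⟨star U * border 1 0 0 U', mul_mem (Unitary.star_mem hU) (border_mem_unitary hU'),
      border 1 0 0 (star W * V'), border_mem_unitary (mul_mem (Unitary.star_mem hW) hV'),
      border γ (leadVec n δ) 0 B', upperBidiagonal_border hB' γ δ, border_mulVec_leadVec _, ?_⟩
    calc A = star U * U * A * (star (border 1 0 0 W) * border 1 0 0 W) := by
          rw [Unitary.star_mul_self_of_mem hU, Unitary.star_mul_self_of_mem (border_mem_unitary hW),
            Matrix.one_mul, Matrix.mul_one]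
      _ = star U * border (γ : ℍ) (leadVec n (δ : ℍ)) 0 C * border 1 0 0 W := by
          rw [← hA]
          simp only [Matrix.mul_assoc, star_eq_conjTranspose]
      _ = _ := by
          rw [hC, map_border, conjTranspose_border]
          simp [Matrix.mul_assoc, border_mul_border, comp_leadVec coe_zero, star_eq_conjTranspose,
            ← vecMul_vecMul, leadVec_coe_vecMul_conjTranspose hV'fix]

end Quaternion

section KroneckerOne

variable {R K ι κ : Type*} [Fintype K]

lemma kronecker_one_mul_apply [NonAssocSemiring R] [Fintype ι] [DecidableEq ι] (T : Matrix K K R)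
    (M : Matrix (K × ι) (K × κ) R) (a b : K) (i : ι) (j : κ) :
    ((T ⊗ₖ (1 : Matrix ι ι R)) * M) (a, i) (b, j) = (T * of fun a b => M (a, i) (b, j)) a b := by
  simp [mul_apply, Fintype.sum_prod_type, one_apply]

lemma mul_kronecker_one_apply [NonAssocSemiring R] [Fintype κ] [DecidableEq κ] (T : Matrix K K R)
    (M : Matrix (K × ι) (K × κ) R) (a b : K) (i : ι) (j : κ) :
    (M * (T ⊗ₖ (1 : Matrix κ κ R))) (a, i) (b, j) = ((of fun a b => M (a, i) (b, j)) * T) a b := by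
  simp [mul_apply, Fintype.sum_prod_type, one_apply]

lemma kronecker_one_mul_eq_mul_kronecker_one_iff [NonAssocSemiring R] [Fintype ι] [DecidableEq ι]
    [Fintype κ] [DecidableEq κ] (T : Matrix K K R) (M : Matrix (K × ι) (K × κ) R) :
    (T ⊗ₖ (1 : Matrix ι ι R)) * M = M * (T ⊗ₖ (1 : Matrix κ κ R)) ↔
      ∀ i j, Commute T (of fun a b => M (a, i) (b, j)) := by
  simp only [Commute, SemiconjBy, ← Matrix.ext_iff, Prod.forall, kronecker_one_mul_apply,
    mul_kronecker_one_apply]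
  exact ⟨fun h i j a b => h a i b j, fun h a i b j => h i j a b⟩

lemma transpose_mul_self_kronecker_one [CommSemiring R] [DecidableEq K] [Fintype ι]
    [DecidableEq ι] {T : Matrix K K R} (hT : Tᵀ * T = 1) :
    (T ⊗ₖ (1 : Matrix ι ι R))ᵀ * (T ⊗ₖ (1 : Matrix ι ι R)) = 1 := by
  rw [← kroneckerMap_transpose, transpose_one, ← mul_kronecker_mul, hT, Matrix.one_mul,
    one_kronecker_one]

end KroneckerOne

lemma mul_eq_mul_of_mul_mul_transpose_eq {R l n : Type*} [Semiring R] [Fintype l] [Fintype n]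
    [DecidableEq n] {P : Matrix l l R} {M : Matrix l n R} {Q : Matrix n n R} (h : P * M * Qᵀ = M)
    (hQ : Qᵀ * Q = 1) : P * M = M * Q :=
  calc P * M = P * M * (Qᵀ * Q) := by rw [hQ, Matrix.mul_one]
    _ = M * Q := by rw [← Matrix.mul_assoc, h]

lemma Jq_transpose_mul_self : Jqᵀ * Jq = 1 := by
  ext a b
  fin_cases a <;> fin_cases b <;> simp [Jq, mul_apply, Fin.sum_univ_four, one_apply]

lemma Rq_transpose_mul_self : Rqᵀ * Rq = 1 := by
  ext a b
  fin_cases a <;> fin_cases b <;> simp [Rq, mul_apply, Fin.sum_univ_four, one_apply]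

def quatBasis : Module.Basis (Fin 4) ℝ ℍ := QuaternionAlgebra.basisOneIJK (-1 : ℝ) 0 (-1)

def quatRep : ℍ →ₐ[ℝ] Matrix (Fin 4) (Fin 4) ℝ := Algebra.leftMulMatrix quatBasis

lemma quatBasis_repr (q : ℍ) : ⇑(quatBasis.repr q) = ![q.re, q.imI, q.imJ, q.imK] := rfl

lemma quatRep_apply (q : ℍ) : quatRep q =
    !![q.re, -q.imI, -q.imJ, -q.imK;
       q.imI, q.re, -q.imK, q.imJ;
       q.imJ, q.imK, q.re, -q.imI;
       q.imK, -q.imJ, q.imI, q.re] := by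
  ext a b
  have hb := quatBasis.repr_self b
  rw [← DFunLike.coe_fn_eq, quatBasis_repr, Finsupp.single_eq_pi_single, funext_iff] at hb
  simp only [Fin.forall_fin_succ] at hb
  rw [quatRep, Algebra.leftMulMatrix_eq_repr_mul, quatBasis_repr]
  fin_cases a <;> fin_cases b <;> simp_all [re_mul, imI_mul, imJ_mul, imK_mul]

lemma quatRep_star (q : ℍ) : quatRep (star q) = (quatRep q)ᵀ := by
  rw [quatRep_apply, quatRep_apply]
  ext a b
  fin_cases a <;> fin_cases b <;> simp

lemma commute_quatRep (q : ℍ) :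
    Commute Jq (quatRep q) ∧ Commute Rq (quatRep q) ∧ Commute Sq (quatRep q) := by
  rw [quatRep_apply]
  refine ⟨?_, ?_, ?_⟩ <;>
    (ext a b; fin_cases a <;> fin_cases b <;> simp [Jq, Rq, Sq, mul_apply, Fin.sum_univ_four])

lemma exists_quatRep_eq_of_commute {X : Matrix (Fin 4) (Fin 4) ℝ} (hJ : Commute Jq X)
    (hR : Commute Rq X) : ∃ q, quatRep q = X := by
  rw [Commute, SemiconjBy, ← Matrix.ext_iff] at hJ hR
  simp only [Jq, Rq, mul_apply, of_apply, cons_val', cons_val_fin_one, Fin.sum_univ_four,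
    Fin.isValue, cons_val_zero, cons_val_one, cons_val, Fin.forall_fin_succ, mul_zero, add_zero,
    mul_one, zero_add, cons_val_succ, Fin.succ_zero_eq_one, Fin.succ_one_eq_two, mul_neg,
    Fin.reduceSucc, IsEmpty.forall_iff, and_true, zero_mul, neg_mul, one_mul, neg_inj] at hJ hR
  refine ⟨(Quaternion.equivTuple ℝ).symm (fun a => X a 0), ?_⟩
  rw [quatRep_apply]
  ext a b
  fin_cases a <;> fin_cases b <;>
    simp only [Fin.isValue, equivTuple_symm_apply, Fin.mk_one, Fin.reduceFinMk, Fin.zero_eta,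
      of_apply, cons_val', cons_val, cons_val_zero, cons_val_one, cons_val_fin_one] <;> grind

section RealRep

variable {m n k : ℕ}

def realRep (A : Matrix (Fin m) (Fin n) ℍ) : Matrix (Fin 4 × Fin m) (Fin 4 × Fin n) ℝ :=
  of fun p q => quatRep (A p.2 q.2) p.1 q.1

lemma realRep_mul (A : Matrix (Fin m) (Fin n) ℍ) (C : Matrix (Fin n) (Fin k) ℍ) :
    realRep (A * C) = realRep A * realRep C := by
  ext ⟨a, i⟩ ⟨b, j⟩
  simp only [realRep, of_apply, mul_apply, map_sum, Matrix.sum_apply, map_mul,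
    Fintype.sum_prod_type]
  exact Finset.sum_comm

lemma realRep_one : realRep (1 : Matrix (Fin n) (Fin n) ℍ) = 1 := by
  ext ⟨a, i⟩ ⟨b, j⟩
  by_cases h : i = j <;> simp [realRep, one_apply, h]

lemma realRep_conjTranspose (A : Matrix (Fin m) (Fin n) ℍ) : realRep Aᴴ = (realRep A)ᵀ := by
  ext ⟨a, i⟩ ⟨b, j⟩
  simp [realRep, quatRep_star]

lemma realRep_map_coe (B : Matrix (Fin m) (Fin n) ℝ) :
    realRep (B.map ((↑) : ℝ → ℍ)) = blockDiag4 B := by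
  ext ⟨a, i⟩ ⟨b, j⟩
  simp [realRep, blockDiag4, ← algebraMap_def, Algebra.algebraMap_eq_smul_one, one_apply, mul_comm]

lemma realRep_orthogonal {U : Matrix (Fin n) (Fin n) ℍ}
    (hU : U ∈ unitary (Matrix (Fin n) (Fin n) ℍ)) :
    realRep U * (realRep U)ᵀ = 1 ∧ (realRep U)ᵀ * realRep U = 1 := by
  rw [← realRep_conjTranspose, ← realRep_mul, ← realRep_mul, ← star_eq_conjTranspose,
    Unitary.mul_star_self_of_mem hU, Unitary.star_mul_self_of_mem hU, realRep_one]
  exact ⟨rfl, rfl⟩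

lemma kronecker_one_mul_realRep {T : Matrix (Fin 4) (Fin 4) ℝ}
    (hT : ∀ q, Commute T (quatRep q)) (A : Matrix (Fin m) (Fin n) ℍ) :
    (T ⊗ₖ (1 : Matrix (Fin m) (Fin m) ℝ)) * realRep A =
      realRep A * (T ⊗ₖ (1 : Matrix (Fin n) (Fin n) ℝ)) :=
  (kronecker_one_mul_eq_mul_kronecker_one_iff T _).mpr fun i j => hT (A i j)

lemma multiSymplectic_realRep {U : Matrix (Fin n) (Fin n) ℍ}
    (hU : U ∈ unitary (Matrix (Fin n) (Fin n) ℍ)) : MultiSymplectic (realRep U) := by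
  have hconj {T : Matrix (Fin 4) (Fin 4) ℝ} (hT : ∀ q, Commute T (quatRep q)) :
      realRep U * (T ⊗ₖ (1 : Matrix (Fin n) (Fin n) ℝ)) * (realRep U)ᵀ = T ⊗ₖ 1 := by
    rw [← kronecker_one_mul_realRep hT U, Matrix.mul_assoc, (realRep_orthogonal hU).1,
      Matrix.mul_one]
  exact ⟨hconj fun q => (commute_quatRep q).1, hconj fun q => (commute_quatRep q).2.1,
    hconj fun q => (commute_quatRep q).2.2⟩

lemma exists_realRep_eq {M : Matrix (Fin 4 × Fin m) (Fin 4 × Fin n) ℝ} (hM : JRSSymmetric M) :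
    ∃ A, realRep A = M := by
  obtain ⟨hJ, hR, -⟩ := hM
  have hJc := (kronecker_one_mul_eq_mul_kronecker_one_iff Jq M).mp <|
    mul_eq_mul_of_mul_mul_transpose_eq hJ (transpose_mul_self_kronecker_one Jq_transpose_mul_self)
  have hRc := (kronecker_one_mul_eq_mul_kronecker_one_iff Rq M).mp <|
    mul_eq_mul_of_mul_mul_transpose_eq hR (transpose_mul_self_kronecker_one Rq_transpose_mul_self)
  choose A hA using fun i j => exists_quatRep_eq_of_commute (hJc i j) (hRc i j)
  exact ⟨of A, by ext ⟨a, i⟩ ⟨b, j⟩; exact congrFun₂ (hA i j) a b⟩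

end RealRep

/-- Multi-Symplectic Bidiagonalization Decomposition: every JRS-symmetric
`M ∈ ℝ^{4m×4n}` factors as `M = Q ⬝ diag(B,B,B,B) ⬝ Pᵀ` with `Q`, `P` orthogonal
multi-symplectic and `B` upper bidiagonal. -/
theorem multiSymplectic_bidiagonalization {m n : ℕ}
    (M : Matrix (Fin 4 × Fin m) (Fin 4 × Fin n) ℝ) (hM : JRSSymmetric M) :
    ∃ (Q : Matrix (Fin 4 × Fin m) (Fin 4 × Fin m) ℝ)
      (P : Matrix (Fin 4 × Fin n) (Fin 4 × Fin n) ℝ)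
      (B : Matrix (Fin m) (Fin n) ℝ),
      (Q * Qᵀ = 1 ∧ Qᵀ * Q = 1) ∧ (P * Pᵀ = 1 ∧ Pᵀ * P = 1) ∧
      MultiSymplectic Q ∧ MultiSymplectic P ∧
      UpperBidiagonal B ∧
      M = Q * blockDiag4 B * Pᵀ := by
  obtain ⟨A, rfl⟩ := exists_realRep_eq hM
  obtain ⟨U, hU, V, hV, B, hB, -, rfl⟩ := Quaternion.exists_unitary_upperBidiagonal A
  refine ⟨realRep U, realRep V, B, realRep_orthogonal hU, realRep_orthogonal hV,
    multiSymplectic_realRep hU, multiSymplectic_realRep hV, hB, ?_⟩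
  rw [realRep_mul, realRep_mul, realRep_map_coe, realRep_conjTranspose]
end
end

section
/- Let M ∈ ℝ^{m×n}, P ∈ ℝ^{n×k}, Q ∈ ℝ^{m×k}, B ∈ ℝ^{k×k}, r ∈ ℝⁿ, and α ∈ ℝ. Assume M P = Q B, Mᵀ Q = P Bᵀ + r e_kᵀ, and that the last row of B equals α e_kᵀ (i.e., e_kᵀ B = α e_kᵀ, which holds with α = B_{kk} when B is upper bidiagonal). Then Mᵀ M P = P (Bᵀ B) + α r e_kᵀ. -/
open Matrix

noncomputable section

/-- `e_k`: the last standard basis vector of `ℝᵏ` (the `k`-th column of `I_k`). -/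
def eLast (k : ℕ) : Fin k → ℝ := fun i => if (i : ℕ) = k - 1 then 1 else 0

/-- from `M P = Q B`, `Mᵀ Q = P Bᵀ + r e_kᵀ` and `e_kᵀ B = α e_kᵀ`,
deduce `Mᵀ M P = P (Bᵀ B) + α r e_kᵀ`. -/
theorem lanczos_tridiagonalization_right {m n k : ℕ}
    (M : Matrix (Fin m) (Fin n) ℝ) (P : Matrix (Fin n) (Fin k) ℝ)
    (Q : Matrix (Fin m) (Fin k) ℝ) (B : Matrix (Fin k) (Fin k) ℝ)
    (r : Fin n → ℝ) (α : ℝ)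
    (h1 : M * P = Q * B)
    (h2 : Mᵀ * Q = P * Bᵀ + vecMulVec r (eLast k))
    (h3 : vecMul (eLast k) B = α • eLast k) :
    Mᵀ * M * P = P * (Bᵀ * B) + α • vecMulVec r (eLast k) := by
  calc Mᵀ * M * P = (Mᵀ * Q) * B := by rw [Matrix.mul_assoc, h1, Matrix.mul_assoc]
    _ = P * (Bᵀ * B) + vecMulVec r (eLast k ᵥ* B) := by
      rw [h2, Matrix.add_mul, Matrix.mul_assoc, vecMulVec_mul]
    _ = P * (Bᵀ * B) + α • vecMulVec r (eLast k) := by rw [h3, vecMulVec_smul]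
end
end

section
/- Let M ∈ ℝ^{m×n}, P ∈ ℝ^{n×k}, Q ∈ ℝ^{m×k}, B ∈ ℝ^{k×k}, r ∈ ℝⁿ, α, σ ∈ ℝ, and u, v ∈ ℝᵏ. Assume M P = Q B, Mᵀ Q = P Bᵀ + r e_kᵀ, e_kᵀ B = α e_kᵀ, and that (σ,u,v) is a singular triplet of B, i.e., B v = σ u and Bᵀ u = σ v. Then the Ritz vector ṽ = P v satisfies Mᵀ M ṽ − σ² ṽ = α (e_kᵀ v) r. -/
open Matrix

noncomputable section

/-- the Ritz vector `ṽ = P v` satisfies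
`Mᵀ M ṽ − σ² ṽ = α (e_kᵀ v) r`. -/
theorem ritz_vector_residual {m n k : ℕ}
    (M : Matrix (Fin m) (Fin n) ℝ) (P : Matrix (Fin n) (Fin k) ℝ)
    (Q : Matrix (Fin m) (Fin k) ℝ) (B : Matrix (Fin k) (Fin k) ℝ)
    (r : Fin n → ℝ) (α σ : ℝ) (u v : Fin k → ℝ)
    (h1 : M * P = Q * B)
    (h2 : Mᵀ * Q = P * Bᵀ + vecMulVec r (eLast k))
    (h3 : vecMul (eLast k) B = α • eLast k)
    (h4 : B.mulVec v = σ • u)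
    (h5 : Bᵀ.mulVec u = σ • v) :
    (Mᵀ * M).mulVec (P.mulVec v) - σ ^ 2 • P.mulVec v
      = (α * (eLast k ⬝ᵥ v)) • r := by
  have hvv : (vecMulVec r (eLast k)).mulVec u = (eLast k ⬝ᵥ u) • r := by
    ext i
    simp [vecMulVec, mulVec, dotProduct, Finset.mul_sum, mul_assoc, mul_comm]
    exact Finset.sum_congr rfl fun j _ => by ring
  have hsu : σ * (eLast k ⬝ᵥ u) = α * (eLast k ⬝ᵥ v) := by
    calc σ * (eLast k ⬝ᵥ u) = eLast k ⬝ᵥ (σ • u) := by rw [dotProduct_smul, smul_eq_mul]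
      _ = eLast k ⬝ᵥ B.mulVec v := by rw [h4]
      _ = vecMul (eLast k) B ⬝ᵥ v := by rw [dotProduct_mulVec]
      _ = (α • eLast k) ⬝ᵥ v := by rw [h3]
      _ = α * (eLast k ⬝ᵥ v) := by rw [smul_dotProduct, smul_eq_mul]
  have key : (Mᵀ * M).mulVec (P.mulVec v) = σ ^ 2 • P.mulVec v + (α * (eLast k ⬝ᵥ v)) • r := by
    calc (Mᵀ * M).mulVec (P.mulVec v)
        = (Mᵀ * M * P).mulVec v := by rw [Matrix.mulVec_mulVec]
      _ = (Mᵀ * (Q * B)).mulVec v := by rw [Matrix.mul_assoc, h1]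
      _ = ((Mᵀ * Q) * B).mulVec v := by rw [Matrix.mul_assoc]
      _ = (Mᵀ * Q).mulVec (B.mulVec v) := by rw [← Matrix.mulVec_mulVec]
      _ = (P * Bᵀ + vecMulVec r (eLast k)).mulVec (σ • u) := by rw [h2, h4]
      _ = σ • ((P * Bᵀ).mulVec u + (vecMulVec r (eLast k)).mulVec u) := by
            rw [add_mulVec, mulVec_smul, mulVec_smul, smul_add]
      _ = σ • (P.mulVec (σ • v) + (eLast k ⬝ᵥ u) • r) := by
            rw [← Matrix.mulVec_mulVec, h5, hvv]
      _ = σ ^ 2 • P.mulVec v + (α * (eLast k ⬝ᵥ v)) • r := by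
            rw [smul_add, mulVec_smul, smul_smul, ← pow_two, smul_smul, hsu]
  rw [key]; abel
end
end

section
/- Let M ∈ ℝ^{m×n}, P ∈ ℝ^{n×k}, Q ∈ ℝ^{m×k}, B ∈ ℝ^{k×k}, r ∈ ℝⁿ, σ ∈ ℝ, and u, v ∈ ℝᵏ. Assume M P = Q B, Mᵀ Q = P Bᵀ + r e_kᵀ, B v = σ u, and Bᵀ u = σ v. Then the approximate singular vectors ũ = Q u and ṽ = P v satisfy M ṽ = σ ũ and Mᵀ ũ = σ ṽ + (e_kᵀ u) r. -/
open Matrix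

noncomputable section

/-- the approximate singular vectors `ũ = Q u`, `ṽ = P v` satisfy
`M ṽ = σ ũ` and `Mᵀ ũ = σ ṽ + (e_kᵀ u) r`. -/
theorem approximate_singular_triplet {m n k : ℕ}
    (M : Matrix (Fin m) (Fin n) ℝ) (P : Matrix (Fin n) (Fin k) ℝ)
    (Q : Matrix (Fin m) (Fin k) ℝ) (B : Matrix (Fin k) (Fin k) ℝ)
    (r : Fin n → ℝ) (σ : ℝ) (u v : Fin k → ℝ)
    (h1 : M * P = Q * B)
    (h2 : Mᵀ * Q = P * Bᵀ + vecMulVec r (eLast k))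
    (h3 : B.mulVec v = σ • u)
    (h4 : Bᵀ.mulVec u = σ • v) :
    M.mulVec (P.mulVec v) = σ • Q.mulVec u ∧
    Mᵀ.mulVec (Q.mulVec u) = σ • P.mulVec v + (eLast k ⬝ᵥ u) • r := by
  constructor
  · rw [mulVec_mulVec, h1, ← mulVec_mulVec, h3, mulVec_smul]
  · rw [mulVec_mulVec, h2, add_mulVec, ← mulVec_mulVec, h4, mulVec_smul]
    congr 1
    ext i
    simp [vecMulVec, mulVec, dotProduct, Finset.mul_sum, mul_comm, mul_left_comm]
end
end

section
/- Let B ∈ ℝ^{k×k} be invertible with e_kᵀ B = α e_kᵀ for some α ∈ ℝ, and let β, θ ∈ ℝ and ŵ ∈ ℝᵏ. Then ((Bᵀ B)² + α² β² e_k e_kᵀ) ŵ = θ (Bᵀ B) ŵ holds if and only if (B Bᵀ + β² e_k e_kᵀ)(B ŵ) = θ (B ŵ). In other words, the harmonic Ritz generalized eigenvalue problem for Bᵀ B is equivalent, via ω = B ŵ, to the ordinary eigenvalue problem for B Bᵀ + β² e_k e_kᵀ. -/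
open Matrix

noncomputable section

/-!
Since `Bᵀ e = α e`, the rank-one term factors through `B`:
`(BᵀB)² + α²β² e eᵀ = Bᵀ (B Bᵀ + β² e eᵀ) B`. The harmonic Ritz equation is therefore
`Bᵀ` applied to the eigenvalue equation for `B Bᵀ + β² e eᵀ` at `B ŵ`, and `Bᵀ` is injective.
-/

namespace Matrix

variable {n R : Type*} [Fintype n] [CommRing R]

theorem transpose_mul_vecMulVec_mul_of_vecMul_eq_smul {B : Matrix n n R} {e : n → R} {α : R}
    (he : e ᵥ* B = α • e) :
    Bᵀ * vecMulVec e e * B = (α * α) • vecMulVec e e := by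
  rw [mul_vecMulVec, vecMulVec_mul, mulVec_transpose, he, smul_vecMulVec, vecMulVec_smul,
    smul_smul]

theorem transpose_mul_add_vecMulVec_mul_of_vecMul_eq_smul [DecidableEq n] {B : Matrix n n R}
    {e : n → R} {α : R} (he : e ᵥ* B = α • e) (c : R) :
    Bᵀ * (B * Bᵀ + c • vecMulVec e e) * B = (Bᵀ * B) ^ 2 + (α ^ 2 * c) • vecMulVec e e := by
  rw [Matrix.mul_add, Matrix.add_mul, Matrix.mul_smul, Matrix.smul_mul,
    transpose_mul_vecMulVec_mul_of_vecMul_eq_smul he, smul_smul, sq, sq, Matrix.mul_assoc,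
    Matrix.mul_assoc, Matrix.mul_assoc, mul_comm c]

theorem transpose_mul_mul_mulVec_eq_smul_iff [DecidableEq n] {B : Matrix n n R}
    (hB : IsUnit B.det) (M : Matrix n n R) (θ : R) (w : n → R) :
    (Bᵀ * M * B) *ᵥ w = θ • (Bᵀ * B) *ᵥ w ↔ M *ᵥ (B *ᵥ w) = θ • B *ᵥ w := by
  rw [← mulVec_mulVec, ← mulVec_mulVec, ← mulVec_mulVec, ← mulVec_smul]
  have hBT : IsUnit Bᵀ := (isUnit_iff_isUnit_det _).2 (isUnit_det_transpose B hB)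
  exact (mulVec_injective_of_isUnit hBT).eq_iff

end Matrix

/-- the harmonic Ritz generalized eigenvalue problem for `Bᵀ B` is
equivalent, via `ω = B ŵ`, to the ordinary eigenvalue problem for
`B Bᵀ + β² e_k e_kᵀ`. -/
theorem harmonic_ritz_equivalence {k : ℕ}
    (B : Matrix (Fin k) (Fin k) ℝ) (hB : IsUnit B.det)
    (α β θ : ℝ) (hrow : vecMul (eLast k) B = α • eLast k)
    (w : Fin k → ℝ) :
    ((Bᵀ * B) ^ 2 + (α ^ 2 * β ^ 2) • vecMulVec (eLast k) (eLast k)).mulVec w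
        = θ • (Bᵀ * B).mulVec w ↔
    (B * Bᵀ + β ^ 2 • vecMulVec (eLast k) (eLast k)).mulVec (B.mulVec w)
        = θ • B.mulVec w := by
  rw [← transpose_mul_add_vecMulVec_mul_of_vecMul_eq_smul hrow]
  exact transpose_mul_mul_mulVec_eq_smul_iff hB _ θ w
end
end

section
/- Let M ∈ ℝ^{m×n}, P ∈ ℝ^{n×k}, Q ∈ ℝ^{m×k}, r ∈ ℝⁿ, and let B ∈ ℝ^{k×k} be invertible with e_kᵀ B = α e_kᵀ for some α ∈ ℝ. Assume M P = Q B and Mᵀ Q = P Bᵀ + r e_kᵀ. Let β, θ ∈ ℝ and ŵ ∈ ℝᵏ satisfy the harmonic Ritz equation (B Bᵀ + β² e_k e_kᵀ)(B ŵ) = θ (B ŵ). Then the harmonic Ritz vector v̂ = P ŵ satisfies Mᵀ M v̂ − θ v̂ = (r − β² P B^{-1} e_k) · (e_kᵀ B ŵ). -/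
open Matrix

noncomputable section

/-- the harmonic Ritz vector `v̂ = P ŵ` satisfies
`Mᵀ M v̂ − θ v̂ = (r − β² P B⁻¹ e_k) (e_kᵀ B ŵ)`. -/
theorem harmonic_ritz_residual {m n k : ℕ}
    (M : Matrix (Fin m) (Fin n) ℝ) (P : Matrix (Fin n) (Fin k) ℝ)
    (Q : Matrix (Fin m) (Fin k) ℝ) (r : Fin n → ℝ)
    (B : Matrix (Fin k) (Fin k) ℝ) (hB : IsUnit B.det)
    (α : ℝ) (hrow : vecMul (eLast k) B = α • eLast k)
    (h1 : M * P = Q * B)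
    (h2 : Mᵀ * Q = P * Bᵀ + vecMulVec r (eLast k))
    (β θ : ℝ) (w : Fin k → ℝ)
    (hharm : (B * Bᵀ + β ^ 2 • vecMulVec (eLast k) (eLast k)).mulVec (B.mulVec w)
        = θ • B.mulVec w) :
    (Mᵀ * M).mulVec (P.mulVec w) - θ • P.mulVec w
      = (eLast k ⬝ᵥ B.mulVec w) •
          (r - β ^ 2 • P.mulVec ((B⁻¹).mulVec (eLast k))) := by
  have hBi : B⁻¹ * B = 1 := nonsing_inv_mul B hB
  set e := eLast k
  have hvmv : ∀ (a : Fin n → ℝ) (b x : Fin k → ℝ),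
      (vecMulVec a b) *ᵥ x = (b ⬝ᵥ x) • a := by
    intro a b x
    ext i
    simp [mulVec, vecMulVec_apply, dotProduct, Finset.mul_sum, mul_assoc,
      mul_comm, mul_left_comm]
  have hvmv' : ∀ (a b x : Fin k → ℝ),
      (vecMulVec a b) *ᵥ x = (b ⬝ᵥ x) • a := by
    intro a b x
    ext i
    simp [mulVec, vecMulVec_apply, dotProduct, Finset.mul_sum, mul_assoc,
      mul_comm, mul_left_comm]
  -- Step 1: MᵀM P = (P Bᵀ + r eᵀ) B
  have hA : Mᵀ * M * P = (P * Bᵀ + vecMulVec r e) * B := by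
    rw [Matrix.mul_assoc, h1, ← Matrix.mul_assoc, h2]
  -- Step 2: from the harmonic equation, BᵀB w = θ w - β²(e⬝Bw) B⁻¹ e
  have hkey : Bᵀ *ᵥ (B *ᵥ w)
      = θ • w - (β ^ 2 * (e ⬝ᵥ B *ᵥ w)) • (B⁻¹ *ᵥ e) := by
    have h := hharm
    rw [add_mulVec, smul_mulVec, hvmv'] at h
    have h2 := congrArg (fun v => B⁻¹ *ᵥ v) h
    simp only [mulVec_add, mulVec_smul, mulVec_mulVec] at h2
    rw [show B⁻¹ * (B * Bᵀ * B) = Bᵀ * B by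
        rw [Matrix.mul_assoc B Bᵀ B, ← Matrix.mul_assoc, hBi, Matrix.one_mul],
      hBi, one_mulVec, ← mulVec_mulVec] at h2
    rw [eq_sub_iff_add_eq, ← h2]
    congr 1
    rw [mul_smul]
  -- Combine
  have hmv : (Mᵀ * M) *ᵥ (P *ᵥ w)
      = P *ᵥ (Bᵀ *ᵥ (B *ᵥ w)) + (e ⬝ᵥ B *ᵥ w) • r := by
    rw [mulVec_mulVec, hA, Matrix.add_mul, add_mulVec]
    simp only [← mulVec_mulVec, hvmv]
  rw [hmv, hkey]
  simp only [mulVec_sub, mulVec_smul, smul_sub, smul_smul, mulVec_mulVec]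
  module
end
end
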